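/- arXiv:2101.06625 — 4 statements merged into one kernel-verified Lean document; each statement's English description precedes it below -/
import Mathlib

section
/- Let (W_i)_{i≥1} be a sequence of independent, identically distributed random variables taking values in the integers ℤ, defined on a probability space (Ω, F, P). Let r be a positive integer with P(W_1 = r) > 0, and set S_t = Σ_{i=1}^t W_i for t ∈ ℕ₀ (so S_0 = 0). Then for every n ∈ ℕ and every integer j ≥ 1, P( r + S_t > 0 for all t ∈ {1,…,n} and r + S_n = j ) ≤ P(W_1 = r)^{-1} · (j/(n+1)) · P(S_{n+1} = j). -/
/-!
Put the step `W_n = r` in front of a path counted on the left: the cyclic sequence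
`(W_n, W_0, …, W_{n-1})` then has all its partial sums positive and total `j`. By the cycle
lemma, at most `j` of the `n + 1` rotations of a cyclic integer sequence with sum `j` have all
partial sums positive, and since `(W_0, …, W_n)` is exchangeable each rotation has this property
with the same probability. With the independence of `W_n` from the first `n` steps this gives
`(n + 1) · P(W_0 = r) · P(left event) ≤ j · P(S_{n+1} = j)`.
-/

open MeasureTheory ProbabilityTheory Finset
open scoped ProbabilityTheory ENNReal
open Fin.NatCast

/-- The indices of `G` carry strictly increasing values of `s`, all in `[s k₀, s k₀ + c)` for the
least index `k₀`. -/
theorem card_le_toNat_of_forall_lt_add {s : ℕ → ℤ} {m : ℕ} {c : ℤ}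
    (hper : ∀ t, s (t + m) = s t + c) {G : Finset ℕ} (hGm : G ⊆ range m)
    (hG : ∀ k ∈ G, ∀ t ∈ Icc 1 m, s k < s (k + t)) : #G ≤ c.toNat := by
  rcases G.eq_empty_or_nonempty with rfl | hne
  · simp
  have hlt : ∀ k ∈ G, k < m := fun k hk => mem_range.mp (hGm hk)
  have hmono : StrictMonoOn s G := fun k hk k' hk' hkk' => by
    simpa [Nat.add_sub_cancel' hkk'.le] using
      hG k hk (k' - k) (mem_Icc.mpr ⟨by omega, by have := hlt k' hk'; omega⟩)
  set k₀ := G.min' hne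
  have hmaps : ∀ k ∈ G, s k ∈ Ico (s k₀) (s k₀ + c) := fun k hk => by
    have hk₀ : k₀ ≤ k := G.min'_le k hk
    have hkm := hlt k hk
    refine mem_Ico.mpr ⟨hmono.monotoneOn (G.min'_mem hne) hk hk₀, ?_⟩
    have := hG k hk (k₀ + m - k) (mem_Icc.mpr ⟨by omega, by omega⟩)
    rwa [Nat.add_sub_cancel' (by omega), hper] at this
  simpa [Int.card_Ico] using card_le_card_of_injOn s hmaps hmono.injOn

section CyclicShifts

variable {m : ℕ} [NeZero m]

def positiveCyclicStarts (x : Fin m → ℤ) : Finset (Fin m) :=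
  {k | ∀ t ∈ Icc (1 : ℕ) m, 0 < ∑ i ∈ range t, x (k + i)}

@[simp]
theorem mem_positiveCyclicStarts {x : Fin m → ℤ} {k : Fin m} :
    k ∈ positiveCyclicStarts x ↔ ∀ t ∈ Icc 1 m, 0 < ∑ i ∈ range t, x (k + i) := by
  simp [positiveCyclicStarts]

theorem mem_positiveCyclicStarts_iff_zero_mem (x : Fin m → ℤ) (k : Fin m) :
    k ∈ positiveCyclicStarts x ↔ 0 ∈ positiveCyclicStarts (fun i => x (k + i)) := by
  simp

/-- The cycle lemma of Dvoretzky and Motzkin. -/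
theorem card_positiveCyclicStarts_le (x : Fin m → ℤ) :
    #(positiveCyclicStarts x) ≤ (∑ i, x i).toNat := by
  set s : ℕ → ℤ := fun t => ∑ i ∈ range t, x i
  have hshift : ∀ (k : Fin m) t, ∑ i ∈ range t, x (k + i) = s (k + t) - s k := fun k t => by
    simp [s, sum_range_add]
  have hper : ∀ t, s (t + m) = s t + ∑ i, x i := fun t => by
    simp only [s]
    rw [add_comm t, sum_range_add, add_comm, ← Fin.sum_univ_eq_sum_range (fun i : ℕ => x i) m]
    simp
  rw [← card_map Fin.valEmbedding]
  refine card_le_toNat_of_forall_lt_add hper (fun k hk => ?_) (fun k hk t ht => ?_)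
  · obtain ⟨k, -, rfl⟩ := mem_map.mp hk
    exact mem_range.mpr k.isLt
  · obtain ⟨k, hk', rfl⟩ := mem_map.mp hk
    have := mem_positiveCyclicStarts.mp hk' t ht
    rw [hshift] at this
    simp only [Fin.valEmbedding_apply]
    omega

end CyclicShifts

def StaysPositiveAndEndsAt (r : ℤ) (n : ℕ) (j : ℤ) (w : ℕ → ℤ) : Prop :=
  (∀ t ∈ Icc 1 n, 0 < r + ∑ i ∈ range t, w i) ∧ r + ∑ i ∈ range n, w i = j

theorem dependsOn_staysPositiveAndEndsAt (r : ℤ) (n : ℕ) (j : ℤ) :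
    DependsOn (StaysPositiveAndEndsAt r n j) (range n) := fun w w' hw => by
  have hpartial : ∀ t ≤ n, ∑ i ∈ range t, w i = ∑ i ∈ range t, w' i := fun t ht =>
    sum_congr rfl fun i hi => hw i (by simp at hi ⊢; omega)
  simp only [StaysPositiveAndEndsAt, hpartial n le_rfl]
  congr 1
  exact propext (forall₂_congr fun t ht => by rw [hpartial t (mem_Icc.mp ht).2])

theorem StaysPositiveAndEndsAt.last_mem_positiveCyclicStarts {n : ℕ} {j : ℤ} {w : ℕ → ℤ}
    (h : StaysPositiveAndEndsAt (w n) n j w) (hlast : 0 < w n) :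
    Fin.last n ∈ positiveCyclicStarts (fun i : Fin (n + 1) => w i) ∧
      ∑ i : Fin (n + 1), w i = j := by
  refine ⟨mem_positiveCyclicStarts.mpr fun t ht => ?_, ?_⟩
  · obtain ⟨u, rfl⟩ : ∃ u, t = u + 1 := ⟨t - 1, by grind⟩
    have hu : u ≤ n := by grind
    have hwrap : ∀ i ∈ range u, w (Fin.last n + ((i + 1 : ℕ) : Fin (n + 1))).val = w i := by
      intro i hi
      rw [Nat.cast_succ, add_comm (i : Fin (n + 1)), ← add_assoc, Fin.last_add_one, zero_add,
        Fin.val_cast_of_lt (by grind)]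
    rw [sum_range_succ', sum_congr rfl hwrap]
    rcases u.eq_zero_or_pos with rfl | hu₀
    · simpa using hlast
    · simpa [add_comm] using h.1 u (mem_Icc.mpr ⟨hu₀, hu⟩)
  · rw [Fin.sum_univ_eq_sum_range (fun i => w i), sum_range_succ, ← h.2]
    ring

theorem sum_measure_le_mul_measure {α ι : Type*} [MeasurableSpace α] (μ : Measure α)
    (s : Finset ι) {G : ι → Set α} (hG : ∀ i ∈ s, MeasurableSet (G i)) {D : Set α}
    (hGD : ∀ i ∈ s, G i ⊆ D) {N : ℕ} (hN : ∀ x ∈ D, ∀ t ⊆ s, (∀ i ∈ t, x ∈ G i) → #t ≤ N) :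
    ∑ i ∈ s, μ (G i) ≤ N * μ D := by
  classical
  calc ∑ i ∈ s, μ (G i) = ∑ i ∈ s, μ.restrict D (G i) :=
        sum_congr rfl fun i hi => (Measure.restrict_eq_self μ (hGD i hi)).symm
    _ = ∫⁻ x, ∑ i ∈ s, (G i).indicator 1 x ∂μ.restrict D := by
        rw [lintegral_finsetSum' _ fun i hi => (measurable_one.indicator (hG i hi)).aemeasurable]
        exact sum_congr rfl fun i hi => (lintegral_indicator_one (hG i hi)).symm
    _ ≤ ∫⁻ _, (N : ℝ≥0∞) ∂μ.restrict D := by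
        refine lintegral_mono fun x => ?_
        simp only [Set.indicator_apply, Pi.one_apply, sum_boole]
        by_cases hx : x ∈ D
        · exact_mod_cast hN x hx _ (filter_subset _ _) fun i hi => (mem_filter.mp hi).2
        · have : {i ∈ s | x ∈ G i} = ∅ :=
            filter_eq_empty_iff.mpr fun i hi hxi => hx (hGD i hi hxi)
          simp [this]
    _ = N * μ D := by simp

theorem card_mul_measure_positiveCyclicStarts_le {m : ℕ} [NeZero m] (ν : Measure (Fin m → ℤ))
    (hν : ∀ k : Fin m, ν.map (fun x i => x (k + i)) = ν) (c : ℤ) (k : Fin m) :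
    m * ν {x | k ∈ positiveCyclicStarts x ∧ ∑ i, x i = c} ≤
      c.toNat * ν {x | ∑ i, x i = c} := by
  set G : Fin m → Set (Fin m → ℤ) := fun k => {x | k ∈ positiveCyclicStarts x ∧ ∑ i, x i = c}
  have hG : ∀ k, ν (G k) = ν (G 0) := fun k => by
    conv_rhs => rw [← hν k]
    rw [Measure.map_apply (measurable_pi_lambda _ fun i => measurable_pi_apply _)
      (Set.to_countable _).measurableSet]
    congr 1
    ext x
    have hsum : ∑ i, x (k + i) = ∑ i, x i := Equiv.sum_comp (Equiv.addLeft k) x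
    simp only [G, Set.mem_preimage, Set.mem_ofPred_eq, ← mem_positiveCyclicStarts_iff_zero_mem,
      hsum]
  calc (m : ℝ≥0∞) * ν (G k) = ∑ k' : Fin m, ν (G k') := by simp [hG]
    _ ≤ _ := by
      refine sum_measure_le_mul_measure ν univ (fun _ _ => (Set.to_countable _).measurableSet)
        (fun _ _ x hx => hx.2) fun x hx => ?_
      intro t _ ht
      refine (card_le_card fun k' hk' => (ht k' hk').1).trans ?_
      exact (card_positiveCyclicStarts_le x).trans_eq (by rw [Set.mem_ofPred_eq.mp hx])

theorem ProbabilityTheory.iIndepFun.map_map_perm_eq {Ω ι β : Type*} [MeasurableSpace Ω]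
    {μ : Measure Ω} [Fintype ι] [MeasurableSpace β] {X : ι → Ω → β} (h : iIndepFun X μ)
    (hX : ∀ i, Measurable (X i)) (σ : Equiv.Perm ι)
    (hident : ∀ i, IdentDistrib (X (σ i)) (X i) μ μ) :
    (μ.map fun ω i => X i ω).map (fun x i => x (σ i)) = μ.map fun ω i => X i ω := by
  rw [Measure.map_map (measurable_pi_lambda _ fun i => measurable_pi_apply (σ i))
    (measurable_pi_lambda _ hX)]
  rw [show ((fun x i => x (σ i)) ∘ fun ω i => X i ω) = fun ω i => X (σ i) ω from rfl,
    (h.precomp σ.injective).map_fun_eq_pi_map (fun i => (hX (σ i)).aemeasurable),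
    h.map_fun_eq_pi_map fun i => (hX i).aemeasurable]
  congr 1
  funext i
  exact (hident i).map_eq

theorem ProbabilityTheory.iIndepFun.measure_inter_preimage_eq_mul_of_dependsOn
    {Ω ι β : Type*} [MeasurableSpace Ω] {μ : Measure Ω} [MeasurableSpace β] [Countable β]
    [MeasurableSingletonClass β] {X : ι → Ω → β} (h : iIndepFun X μ)
    (hX : ∀ i, Measurable (X i)) {S : Finset ι} {k : ι} (hk : k ∉ S) {P : (ι → β) → Prop}
    (hP : DependsOn P S) (B : Set β) :
    μ ({ω | P (X · ω)} ∩ X k ⁻¹' B) = μ {ω | P (X · ω)} * μ (X k ⁻¹' B) := by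
  obtain ⟨g, rfl⟩ := dependsOn_iff_exists_comp.mp hP
  have hindep := h.indepFun_finset S {k} (disjoint_singleton_right.mpr hk) hX
  exact indepFun_iff_measure_inter_preimage_eq_mul.mp hindep {y | g y}
    {y | y ⟨k, mem_singleton_self k⟩ ∈ B} (Set.to_countable _).measurableSet
    (Set.to_countable _).measurableSet

/-- ballot-type estimate, Lemma 3.1 of the paper.
Let `(W_i)` be i.i.d. ℤ-valued random variables, let `r ∈ ℕ` with `r ≥ 1` and
`P(W₁ = r) > 0`, and let `S_t = Σ_{i=1}^t W_i`. Then for every `n ∈ ℕ` and every integer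
`j ≥ 1`,
`P(r + S_t > 0 ∀ t ∈ [n], r + S_n = j) ≤ P(W₁ = r)⁻¹·(j/(n+1))·P(S_{n+1} = j)`. -/
theorem ballot_type_estimate {Ω : Type*} [MeasureSpace Ω]
    [IsProbabilityMeasure (ℙ : Measure Ω)]
    (W : ℕ → Ω → ℤ) (hWmeas : ∀ i, Measurable (W i))
    (hindep : iIndepFun W ℙ)
    (hident : ∀ i, IdentDistrib (W i) (W 0) ℙ ℙ)
    (r : ℕ) (hr : 1 ≤ r) (hrpos : 0 < (ℙ {ω | W 0 ω = (r : ℤ)}).toReal)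
    (n : ℕ) (j : ℤ) (hj : 1 ≤ j) :
    (ℙ {ω | (∀ t ∈ Finset.Icc 1 n, 0 < (r : ℤ) + ∑ i ∈ Finset.range t, W i ω) ∧
        (r : ℤ) + ∑ i ∈ Finset.range n, W i ω = j}).toReal ≤
      ((ℙ {ω | W 0 ω = (r : ℤ)}).toReal)⁻¹ * ((j : ℝ) / ((n : ℝ) + 1)) *
        (ℙ {ω | ∑ i ∈ Finset.range (n + 1), W i ω = j}).toReal := by
  lift j to ℕ using by omega
  set A := {ω | StaysPositiveAndEndsAt r n j (W · ω)}
  set V : Ω → Fin (n + 1) → ℤ := fun ω i => W i ω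
  set ν := Measure.map V ℙ
  have hV : Measurable V := measurable_pi_lambda _ fun i => hWmeas i
  have hν (s : Set (Fin (n + 1) → ℤ)) : ν s = ℙ (V ⁻¹' s) :=
    Measure.map_apply hV (Set.to_countable s).measurableSet
  have h_indep : ℙ (A ∩ W n ⁻¹' {(r : ℤ)}) = ℙ A * ℙ (W 0 ⁻¹' {(r : ℤ)}) := by
    rw [← (hident n).measure_mem_eq (measurableSet_singleton _)]
    exact hindep.measure_inter_preimage_eq_mul_of_dependsOn hWmeas (by simp)
      (dependsOn_staysPositiveAndEndsAt r n j) _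
  have h_sub : A ∩ W n ⁻¹' {(r : ℤ)} ⊆
      V ⁻¹' {x | Fin.last n ∈ positiveCyclicStarts x ∧ ∑ i, x i = j} := by
    rintro ω ⟨hA, hWn : W n ω = r⟩
    exact StaysPositiveAndEndsAt.last_mem_positiveCyclicStarts (w := (W · ω)) (by rwa [hWn])
      (by omega)
  have h_sum : V ⁻¹' {x | ∑ i, x i = j} = {ω | ∑ i ∈ range (n + 1), W i ω = j} := by
    ext ω
    exact Iff.of_eq (congrArg (· = (j : ℤ)) (Fin.sum_univ_eq_sum_range (W · ω) (n + 1)))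
  have h_rot (k : Fin (n + 1)) : ν.map (fun x i => x (k + i)) = ν :=
    (hindep.precomp (g := Fin.val) Fin.val_injective).map_map_perm_eq (fun i => hWmeas i)
      (Equiv.addLeft k) fun i => (hident _).trans (hident _).symm
  have key : ℙ A * ℙ (W 0 ⁻¹' {(r : ℤ)}) * (n + 1 : ℕ) ≤
      j * ℙ {ω | ∑ i ∈ range (n + 1), W i ω = j} := calc
    _ = (n + 1 : ℕ) * ℙ (A ∩ W n ⁻¹' {(r : ℤ)}) := by rw [h_indep, mul_comm]
    _ ≤ (n + 1 : ℕ) * ν {x | Fin.last n ∈ positiveCyclicStarts x ∧ ∑ i, x i = j} := by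
      rw [hν]
      exact mul_le_mul_right (measure_mono h_sub) _
    _ ≤ j * ν {x | ∑ i, x i = j} := by
      simpa using card_mul_measure_positiveCyclicStarts_le _ h_rot j (Fin.last n)
    _ = _ := by rw [hν, h_sum]
  have hreal := ENNReal.toReal_mono (by finiteness) key
  simp only [ENNReal.toReal_mul, ENNReal.toReal_natCast] at hreal
  change (ℙ A).toReal ≤ (ℙ (W 0 ⁻¹' {(r : ℤ)})).toReal⁻¹ * _ * _
  rw [show ∀ a b c d : ℝ, a⁻¹ * (b / c) * d = b * d / (a * c) by intros; ring,
    le_div_iff₀ (by positivity)]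
  push_cast at hreal ⊢
  linarith
end

section
/- Let F : (0,∞) → [0,1] be a distribution function and suppose there exist c_F > 0 and τ > 4 such that 1 − F(x) ≤ c_F · x^{−(τ−1)} for all x ≥ 0. For n ∈ ℕ and j ∈ [n] define w_j = [1−F]^{-1}(j/n) as above. Then there is a finite constant C₁, depending only on c_F and τ, such that for all sufficiently large n, ( Σ_{i∈[n]} w_i³ ) / ( Σ_{i∈[n]} w_i ) ≤ C₁. -/
open Finset

/-- The generalized inverse `[1−F]^{-1}` of the tail of a distribution function
`F : (0,∞) → [0,1]`: `[1−F]^{-1}(u) = inf{s > 0 : 1 − F(s) ≤ u}` for `u ∈ (0,1)`, with the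
convention `[1−F]^{-1}(1) = 0`. -/
noncomputable def invTail (F : ℝ → ℝ) (u : ℝ) : ℝ :=
  if u = 1 then 0 else sInf {s : ℝ | 0 < s ∧ 1 - F s ≤ u}

lemma invTail_nonneg (F : ℝ → ℝ) (u : ℝ) : 0 ≤ invTail F u := by
  unfold invTail
  split
  · exact le_refl 0
  · exact Real.sInf_nonneg (fun x hx => le_of_lt hx.1)

lemma bernoulli_step {α : ℝ} (hα : 0 < α) (hα1 : α < 1) {t : ℝ} (ht : 1 ≤ t) :
    (1 - α) * t ^ (-α) ≤ t ^ (1 - α) - (t - 1) ^ (1 - α) := by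
  have ht0 : 0 < t := lt_of_lt_of_le one_pos ht
  have key : (1 + (-1/t)) ^ (1 - α) ≤ 1 + (1 - α) * (-1/t) := by
    apply rpow_one_add_le_one_add_mul_self
    · have : 1/t ≤ 1 := by
        rw [div_le_one ht0]; exact ht
      have : -1/t = -(1/t) := by ring
      rw [this]; linarith [div_le_one ht0 |>.mpr ht]
    · linarith
    · linarith
  have h1 : 1 + (-1/t) = (t - 1)/t := by field_simp; ring
  have ht1 : (0:ℝ) ≤ t - 1 := by linarith
  have e1 : ((t-1)/t) ^ (1-α) = (t-1)^(1-α) * t^(-(1-α)) := by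
    rw [Real.div_rpow ht1 ht0.le, Real.rpow_neg ht0.le, div_eq_mul_inv]
  rw [h1, e1] at key
  have hpow : (0:ℝ) < t ^ (1 - α) := Real.rpow_pos_of_pos ht0 _
  have key2 : (t-1)^(1-α) * t^(-(1-α)) * t^(1-α) ≤ (1 + (1-α)*(-1/t)) * t^(1-α) :=
    mul_le_mul_of_nonneg_right key hpow.le
  have e2 : (t-1)^(1-α) * t^(-(1-α)) * t^(1-α) = (t-1)^(1-α) := by
    rw [mul_assoc, ← Real.rpow_add ht0]
    simp
  have e4 : t^(1-α)/t = t^(-α) := by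
    nth_rewrite 2 [show t = t ^ (1:ℝ) from (Real.rpow_one t).symm]
    rw [← Real.rpow_sub ht0]
    norm_num
  have e3 : (1 + (1-α)*(-1/t)) * t^(1-α) = t^(1-α) - (1-α) * t^(-α) := by
    have : (1 + (1-α)*(-1/t)) * t^(1-α) = t^(1-α) - (1-α) * (t^(1-α)/t) := by
      field_simp; ring
    rw [this, e4]
  rw [e2, e3] at key2
  linarith

lemma sum_rpow_neg_le {α : ℝ} (hα : 0 < α) (hα1 : α < 1) (n : ℕ) :
    ∑ i ∈ Icc 1 n, (i:ℝ) ^ (-α) ≤ (n:ℝ) ^ (1-α) / (1-α) := by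
  have h1α : (0:ℝ) < 1 - α := by linarith
  have key : (1-α) * ∑ i ∈ Icc 1 n, (i:ℝ) ^ (-α) ≤ (n:ℝ)^(1-α) := by
    rw [Finset.mul_sum]
    calc ∑ i ∈ Icc 1 n, (1-α) * (i:ℝ)^(-α)
        ≤ ∑ i ∈ Icc 1 n, ((i:ℝ)^(1-α) - ((i:ℝ)-1)^(1-α)) := by
          apply Finset.sum_le_sum
          intro i hi
          have h1 : 1 ≤ i := (Finset.mem_Icc.mp hi).1
          exact bernoulli_step hα hα1 (by exact_mod_cast h1)
      _ = (n:ℝ)^(1-α) - ((0:ℕ):ℝ)^(1-α) := by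
          have hIcc : Icc 1 n = Ico 1 (n+1) := by
            rw [Finset.Ico_add_one_right_eq_Icc]
          rw [hIcc, Finset.sum_Ico_eq_sum_range]
          have hts := Finset.sum_range_sub (fun k => ((k:ℝ))^(1-α)) n
          simp only [Nat.add_sub_cancel] at *
          rw [← hts]
          apply Finset.sum_congr rfl
          intro i _
          push_cast
          ring_nf
      _ ≤ (n:ℝ)^(1-α) := by
          simp only [Nat.cast_zero, Real.zero_rpow h1α.ne']
          simp
  rw [le_div_iff₀ h1α]
  linarith [key]

section aux
variable {F : ℝ → ℝ} {c_F τ : ℝ}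

lemma mem_tail_set (hcF : 0 < c_F) (hτ : 4 < τ)
    (htail : ∀ x : ℝ, 0 ≤ x → (1 - F x) * x ^ (τ - 1) ≤ c_F)
    {u : ℝ} (hu : 0 < u) :
    (c_F / u) ^ ((1:ℝ)/(τ-1)) ∈ {s : ℝ | 0 < s ∧ 1 - F s ≤ u} := by
  have hτ1 : (0:ℝ) < τ - 1 := by linarith
  set s₀ := (c_F / u) ^ ((1:ℝ)/(τ-1)) with hs₀
  have hcu : 0 < c_F / u := div_pos hcF hu
  have hs₀pos : 0 < s₀ := Real.rpow_pos_of_pos hcu _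
  refine ⟨hs₀pos, ?_⟩
  have hpow : s₀ ^ (τ - 1) = c_F / u := by
    rw [hs₀, ← Real.rpow_mul hcu.le, one_div_mul_cancel hτ1.ne', Real.rpow_one]
  have h := htail s₀ hs₀pos.le
  rw [hpow] at h
  have hc : c_F = u * (c_F / u) := by field_simp
  have : (1 - F s₀) * (c_F / u) ≤ u * (c_F / u) := by rw [← hc]; exact h
  exact le_of_mul_le_mul_right this hcu

lemma invTail_le (hcF : 0 < c_F) (hτ : 4 < τ)
    (htail : ∀ x : ℝ, 0 ≤ x → (1 - F x) * x ^ (τ - 1) ≤ c_F)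
    {u : ℝ} (hu : 0 < u) :
    invTail F u ≤ (c_F / u) ^ ((1:ℝ)/(τ-1)) := by
  unfold invTail
  split
  · exact (Real.rpow_pos_of_pos (div_pos hcF hu) _).le
  · exact csInf_le ⟨0, fun x hx => hx.1.le⟩ (mem_tail_set hcF hτ htail hu)

lemma invTail_ge (hmono : ∀ ⦃x y : ℝ⦄, 0 < x → x ≤ y → F x ≤ F y)
    (hcF : 0 < c_F) (hτ : 4 < τ)
    (htail : ∀ x : ℝ, 0 ≤ x → (1 - F x) * x ^ (τ - 1) ≤ c_F)
    {x0 : ℝ} (hx0 : 0 < x0) (hFx0 : F x0 < 1/2)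
    {u : ℝ} (hu : 0 < u) (hu2 : u ≤ 1/2) :
    x0 ≤ invTail F u := by
  unfold invTail
  have hne : u ≠ 1 := by intro h; rw [h] at hu2; norm_num at hu2
  rw [if_neg hne]
  apply le_csInf ⟨_, mem_tail_set hcF hτ htail hu⟩
  intro s hs
  by_contra hcon
  push_neg at hcon
  have : F s ≤ F x0 := hmono hs.1 hcon.le
  have : 1 - F s ≤ u := hs.2
  linarith

end aux


/-- If the distribution function `F` satisfies `1 − F(x) ≤ c_F·x^{−(τ−1)}`
for all `x ≥ 0`, with `c_F > 0` and `τ > 4`, and `w_j = [1−F]^{-1}(j/n)` for `j ∈ [n]`, then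
there is a finite constant `C₁`, depending only on `c_F` and `τ`, such that for all
sufficiently large `n`, `(Σ_{i∈[n]} w_i³)/(Σ_{i∈[n]} w_i) ≤ C₁`. -/
theorem weights_size_biased_second_moment_bound (F : ℝ → ℝ)
    (hmono : ∀ ⦃x y : ℝ⦄, 0 < x → x ≤ y → F x ≤ F y)
    (hrange : ∀ x : ℝ, 0 < x → 0 ≤ F x ∧ F x ≤ 1)
    (hlim0 : Filter.Tendsto F (nhdsWithin 0 (Set.Ioi 0)) (nhds 0))
    (hlim1 : Filter.Tendsto F Filter.atTop (nhds 1))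
    (c_F τ : ℝ) (hcF : 0 < c_F) (hτ : 4 < τ)
    (htail : ∀ x : ℝ, 0 ≤ x → (1 - F x) * x ^ (τ - 1) ≤ c_F) :
    ∃ C₁ : ℝ, 0 < C₁ ∧ ∃ N : ℕ, ∀ n : ℕ, N ≤ n →
      (∑ i ∈ Finset.Icc 1 n, (invTail F ((i : ℝ) / n)) ^ 3) /
          (∑ i ∈ Finset.Icc 1 n, invTail F ((i : ℝ) / n)) ≤ C₁ := by
  -- choose x0 with F x0 < 1/2
  obtain ⟨x0, hFx0, hx0⟩ :=
    ((hlim0.eventually_lt_const (by norm_num : (0:ℝ) < 1/2)).and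
      eventually_mem_nhdsWithin).exists
  rw [Set.mem_Ioi] at hx0
  set α : ℝ := 3 / (τ - 1) with hαdef
  have hτ1 : (0:ℝ) < τ - 1 := by linarith
  have hα : 0 < α := by positivity
  have hα1 : α < 1 := by
    rw [hαdef, div_lt_one hτ1]; linarith
  have h1α : (0:ℝ) < 1 - α := by linarith
  refine ⟨4 * c_F ^ α / ((1 - α) * x0), by positivity, 2, fun n hn => ?_⟩
  have hn0 : (0:ℝ) < n := by
    have : (2:ℝ) ≤ n := by exact_mod_cast hn
    linarith
  -- denominator lower bound
  have hden : x0 * ((n:ℝ)/4) ≤ ∑ i ∈ Finset.Icc 1 n, invTail F ((i : ℝ) / n) := by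
    have hsub : ∑ i ∈ Finset.Icc 1 (n/2), invTail F ((i : ℝ) / n) ≤
        ∑ i ∈ Finset.Icc 1 n, invTail F ((i : ℝ) / n) := by
      apply Finset.sum_le_sum_of_subset_of_nonneg
      · exact Finset.Icc_subset_Icc_right (Nat.div_le_self n 2)
      · intro i _ _; exact invTail_nonneg F _
    have hterm : ∀ i ∈ Finset.Icc 1 (n/2), x0 ≤ invTail F ((i : ℝ) / n) := by
      intro i hi
      rw [Finset.mem_Icc] at hi
      have hi1 : 1 ≤ i := hi.1
      have h2i : 2 * i ≤ n := by omega
      apply invTail_ge hmono hcF hτ htail hx0 hFx0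
      · positivity
      · rw [div_le_iff₀ hn0]
        have : (2:ℝ) * i ≤ n := by exact_mod_cast h2i
        linarith
    have hcard : x0 * ((n/2 : ℕ):ℝ) ≤ ∑ i ∈ Finset.Icc 1 (n/2), invTail F ((i : ℝ) / n) := by
      calc x0 * ((n/2 : ℕ):ℝ) = ∑ _i ∈ Finset.Icc 1 (n/2), x0 := by
            rw [Finset.sum_const, Nat.card_Icc]
            simp [mul_comm]
        _ ≤ _ := Finset.sum_le_sum hterm
    have hhalf : (n:ℝ)/4 ≤ ((n/2 : ℕ):ℝ) := by
      have h2 : n ≤ 2 * (n/2) + 1 := by omega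
      have h2' : (n:ℝ) ≤ 2 * ((n/2 : ℕ):ℝ) + 1 := by exact_mod_cast h2
      have hn2 : (2:ℝ) ≤ n := by exact_mod_cast hn
      linarith
    calc x0 * ((n:ℝ)/4) ≤ x0 * ((n/2 : ℕ):ℝ) := by nlinarith
      _ ≤ _ := hcard.trans hsub
  have hdenpos : 0 < ∑ i ∈ Finset.Icc 1 n, invTail F ((i : ℝ) / n) :=
    lt_of_lt_of_le (by positivity) hden
  -- numerator upper bound
  have hnum : ∑ i ∈ Finset.Icc 1 n, (invTail F ((i : ℝ) / n)) ^ 3 ≤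
      c_F ^ α * (n:ℝ) / (1 - α) := by
    have hterm : ∀ i ∈ Finset.Icc 1 n, (invTail F ((i : ℝ) / n)) ^ 3 ≤
        c_F ^ α * (n:ℝ) ^ α * (i:ℝ) ^ (-α) := by
      intro i hi
      rw [Finset.mem_Icc] at hi
      have hi1 : (1:ℝ) ≤ i := by exact_mod_cast hi.1
      have hipos : (0:ℝ) < i := by linarith
      have hu : 0 < (i:ℝ)/n := by positivity
      have hb := invTail_le hcF hτ htail hu
      have hbase : (0:ℝ) < c_F / ((i:ℝ)/n) := div_pos hcF hu
      calc (invTail F ((i : ℝ) / n)) ^ 3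
          ≤ ((c_F / ((i:ℝ)/n)) ^ ((1:ℝ)/(τ-1))) ^ 3 :=
            pow_le_pow_left₀ (invTail_nonneg F _) hb 3
        _ = (c_F / ((i:ℝ)/n)) ^ α := by
            rw [← Real.rpow_natCast (_ ^ ((1:ℝ)/(τ-1))) 3, ← Real.rpow_mul hbase.le]
            norm_num
            rw [hαdef]
            ring_nf
        _ = c_F ^ α * (n:ℝ) ^ α * (i:ℝ) ^ (-α) := by
            rw [div_div_eq_mul_div, Real.div_rpow (by positivity) hipos.le,
              Real.mul_rpow hcF.le hn0.le, Real.rpow_neg hipos.le, div_eq_mul_inv]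
    calc ∑ i ∈ Finset.Icc 1 n, (invTail F ((i : ℝ) / n)) ^ 3
        ≤ ∑ i ∈ Finset.Icc 1 n, c_F ^ α * (n:ℝ) ^ α * (i:ℝ) ^ (-α) :=
          Finset.sum_le_sum hterm
      _ = c_F ^ α * (n:ℝ) ^ α * ∑ i ∈ Finset.Icc 1 n, (i:ℝ) ^ (-α) := by
          rw [Finset.mul_sum]
      _ ≤ c_F ^ α * (n:ℝ) ^ α * ((n:ℝ) ^ (1-α) / (1-α)) := by
          apply mul_le_mul_of_nonneg_left (sum_rpow_neg_le hα hα1 n) (by positivity)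
      _ = c_F ^ α * (n:ℝ) / (1 - α) := by
          have h : (n:ℝ)^α * (n:ℝ)^(1-α) = (n:ℝ) := by
            rw [← Real.rpow_add hn0]; norm_num
          linear_combination (c_F ^ α / (1-α)) * h
  rw [div_le_iff₀ hdenpos]
  calc ∑ i ∈ Finset.Icc 1 n, (invTail F ((i : ℝ) / n)) ^ 3
      ≤ c_F ^ α * (n:ℝ) / (1 - α) := hnum
    _ = (4 * c_F ^ α / ((1 - α) * x0)) * (x0 * ((n:ℝ)/4)) := by
        field_simp
    _ ≤ (4 * c_F ^ α / ((1 - α) * x0)) * ∑ i ∈ Finset.Icc 1 n, invTail F ((i : ℝ) / n) := by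
        apply mul_le_mul_of_nonneg_left hden (by positivity)
end

section
/- Let β, γ > 0 with β·γ² = 1, and let n ∈ ℕ with n ≥ γ (so that γ/n ≤ 1). Then for every r with 0 < r < min{1, 1/(2γ)}, ( 1 − γ/n + (γ/n)·( 1 − γ/n + (γ/n)·e^{r} )^{n−1} )^{⌊βn⌋} ≤ e^{ r + (1+4γ) r² }. -/
/-!
Bound each binomial generating function by an exponential, `1 - p + p x ≤ exp (p (x - 1))`.
The inner factor is then at most `E = exp (γ (eʳ - 1))`, because `(n - 1) γ/n ≤ γ`, and the
outer one at most `exp ((E - 1) / γ)`, because `⌊βn⌋ γ/n ≤ βγ = 1/γ`. Finally the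
second-order bound `eˣ ≤ 1 + x + x²` for `|x| ≤ 1`, applied first to `r` and then to
`γ (eʳ - 1) ≤ 1`, gives `(E - 1) / γ ≤ r + (1 + 4γ) r²`.
-/

open Real

lemma natCast_mul_div_natCast_le {m n : ℕ} (hmn : m ≤ n) {a : ℝ} (ha : 0 ≤ a) :
    (m : ℝ) * (a / n) ≤ a := by
  rcases (Nat.zero_le n).eq_or_lt with rfl | hn
  · simpa [Nat.le_zero.mp hmn] using ha
  · calc (m : ℝ) * (a / n) ≤ n * (a / n) := by gcongr
      _ = a := mul_div_cancel₀ a (by positivity)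

lemma exp_le_one_add_add_sq {x : ℝ} (hx : |x| ≤ 1) : exp x ≤ 1 + x + x ^ 2 := by
  linarith [(abs_le.mp (abs_exp_sub_one_sub_id_le hx)).2]

lemma one_le_one_sub_add_mul {p x : ℝ} (hp : 0 ≤ p) (hx : 1 ≤ x) : 1 ≤ 1 - p + p * x := by
  nlinarith

lemma one_sub_add_mul_pow_le_exp {p x c : ℝ} (hp : 0 ≤ p) (hx : 1 ≤ x) {m : ℕ}
    (hm : m * p ≤ c) : (1 - p + p * x) ^ m ≤ exp (c * (x - 1)) := by
  calc (1 - p + p * x) ^ m ≤ exp (p * (x - 1)) ^ m := by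
        gcongr
        · linarith [one_le_one_sub_add_mul hp hx]
        · linarith [add_one_le_exp (p * (x - 1))]
    _ = exp (m * p * (x - 1)) := by rw [← exp_nat_mul, mul_assoc]
    _ ≤ exp (c * (x - 1)) := by gcongr

lemma exp_mul_exp_sub_one_le {γ r : ℝ} (hγ : 0 ≤ γ) (hr0 : 0 ≤ r) (hr1 : r ≤ 1)
    (hγr : 2 * γ * r ≤ 1) : exp (γ * (exp r - 1)) ≤ 1 + γ * (r + (1 + 4 * γ) * r ^ 2) := by
  set s := γ * (exp r - 1)
  set t := γ * r * (1 + r)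
  have hs0 : 0 ≤ s := mul_nonneg hγ (by linarith [add_one_le_exp r])
  have hst : s ≤ t := by
    have := exp_le_one_add_add_sq (abs_le.mpr ⟨by linarith, hr1⟩)
    calc s ≤ γ * (r + r ^ 2) := mul_le_mul_of_nonneg_left (by linarith) hγ
      _ = t := by ring
  have ht1 : t ≤ 1 := by nlinarith
  have ht_sq : t ^ 2 ≤ 4 * γ ^ 2 * r ^ 2 := by
    calc t ^ 2 = (γ * r) ^ 2 * (1 + r) ^ 2 := by ring
      _ ≤ (γ * r) ^ 2 * 2 ^ 2 := by gcongr; linarith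
      _ = 4 * γ ^ 2 * r ^ 2 := by ring
  calc exp s ≤ 1 + s + s ^ 2 := exp_le_one_add_add_sq (abs_le.mpr ⟨by linarith, by linarith⟩)
    _ ≤ 1 + t + t ^ 2 := by gcongr
    _ ≤ 1 + γ * (r + (1 + 4 * γ) * r ^ 2) := by linarith

theorem compound_binomial_mgf_bound_general (β γ : ℝ) (hβ : 0 < β) (hγ : 0 < γ)
    (hcrit : β * γ ^ 2 = 1) (n : ℕ) (r : ℝ)
    (hr0 : 0 < r) (hr : r < min 1 (1 / (2 * γ))) :
    (1 - γ / n + (γ / n) * (1 - γ / n + (γ / n) * Real.exp r) ^ (n - 1)) ^ (⌊β * n⌋₊) ≤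
      Real.exp (r + (1 + 4 * γ) * r ^ 2) := by
  have hr1 : r < 1 := hr.trans_le (min_le_left _ _)
  have hγr : 2 * γ * r ≤ 1 := by
    have := hr.trans_le (min_le_right _ _)
    rw [lt_div_iff₀ (by positivity)] at this
    linarith
  set p := γ / n
  have hp : 0 ≤ p := by positivity
  set E := exp (γ * (exp r - 1))
  have hE : 1 ≤ E := one_le_exp (mul_nonneg hγ.le (by linarith [add_one_le_exp r]))
  have hinner : (1 - p + p * exp r) ^ (n - 1) ≤ E :=
    one_sub_add_mul_pow_le_exp hp (one_le_exp hr0.le)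
      (natCast_mul_div_natCast_le (n.sub_le 1) hγ.le)
  have houter : (⌊β * n⌋₊ : ℝ) * p ≤ 1 / γ := by
    calc (⌊β * n⌋₊ : ℝ) * p ≤ β * n * p := by gcongr; exact Nat.floor_le (by positivity)
      _ = β * (n * (γ / n)) := by ring
      _ ≤ β * γ := by gcongr; exact natCast_mul_div_natCast_le le_rfl hγ.le
      _ = 1 / γ := by field_simp; linarith
  calc _ ≤ (1 - p + p * E) ^ ⌊β * n⌋₊ := by
        gcongr
        exact (one_le_one_sub_add_mul hp (one_le_pow₀ (one_le_one_sub_add_mul hp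
          (one_le_exp hr0.le)))).trans' zero_le_one
    _ ≤ exp (1 / γ * (E - 1)) := one_sub_add_mul_pow_le_exp hp hE houter
    _ ≤ exp (r + (1 + 4 * γ) * r ^ 2) := by
        gcongr
        rw [one_div_mul_eq_div, div_le_iff₀ hγ]
        linarith [exp_mul_exp_sub_one_le hγ.le hr0.le hr1.le hγr]

/-- At criticality `β·γ² = 1`, the moment generating function of the
compound binomial degree distribution of the random intersection graph satisfies, for
`0 < r < min{1, 1/(2γ)}` and `n ≥ γ`,
`(1 − γ/n + (γ/n)(1 − γ/n + (γ/n)e^r)^{n−1})^{⌊βn⌋} ≤ e^{r + (1+4γ)r²}`. -/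
theorem compound_binomial_mgf_bound (β γ : ℝ) (hβ : 0 < β) (hγ : 0 < γ)
    (hcrit : β * γ ^ 2 = 1) (n : ℕ) (hn : γ ≤ (n : ℝ)) (r : ℝ)
    (hr0 : 0 < r) (hr : r < min 1 (1 / (2 * γ))) :
    (1 - γ / n + (γ / n) * (1 - γ / n + (γ / n) * Real.exp r) ^ (n - 1)) ^ (⌊β * n⌋₊) ≤
      Real.exp (r + (1 + 4 * γ) * r ^ 2) :=
  compound_binomial_mgf_bound_general β γ hβ hγ hcrit n r hr0 hr
end

section
/- Let n ∈ ℕ and let w_1, …, w_n be positive reals with l_n = Σ_{i∈[n]} w_i. Let r ∈ (0,1) satisfy w_i·(r + r²) ≤ 1 for every i ∈ [n]. Then Σ_{i∈[n]} (w_i / l_n) · e^{w_i (e^{r} − 1)} ≤ 1 + (r + r²)·( Σ_{i∈[n]} w_i² ) / l_n + 4 r² · ( Σ_{i∈[n]} w_i³ ) / l_n. -/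
open Finset

lemma exp_quad_bound_aux (x : ℝ) (h0 : 0 ≤ x) (h1 : x ≤ 1) :
    Real.exp x ≤ 1 + x + x ^ 2 := by
  have hx : |x| ≤ 1 := by rwa [abs_of_nonneg h0]
  have h := Real.exp_bound hx (n := 2) (by norm_num)
  have hs : (∑ i ∈ Finset.range 2, x ^ i / (Nat.factorial i)) = 1 + x := by
    simp [Finset.sum_range_succ, Nat.factorial]
  rw [hs, abs_of_nonneg h0] at h
  have := abs_le.mp h
  have hx2 : x ^ 2 * ((2 + 1) / ((Nat.factorial 2) * 2)) = 3 / 4 * x ^ 2 := by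
    norm_num [Nat.factorial]; ring
  nlinarith [sq_nonneg x, this.2]

/-- Bound on the moment generating function of the mixed Poisson
offspring distribution in the Norros–Reittu cluster exploration: if `w₁,…,wₙ > 0`,
`lₙ = Σ wᵢ`, `r ∈ (0,1)` and `wᵢ(r+r²) ≤ 1` for all `i`, then
`Σᵢ (wᵢ/lₙ) e^{wᵢ(e^r−1)} ≤ 1 + (r+r²)(Σᵢ wᵢ²)/lₙ + 4r²(Σᵢ wᵢ³)/lₙ`. -/
theorem mixed_poisson_mgf_bound (n : ℕ) (w : Fin n → ℝ) (hw : ∀ i, 0 < w i)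
    (r : ℝ) (hr0 : 0 < r) (hr1 : r < 1) (hwr : ∀ i, w i * (r + r ^ 2) ≤ 1) :
    (∑ i, (w i / (∑ j, w j)) * Real.exp (w i * (Real.exp r - 1))) ≤
      1 + (r + r ^ 2) * (∑ i, (w i) ^ 2) / (∑ j, w j) +
        4 * r ^ 2 * (∑ i, (w i) ^ 3) / (∑ j, w j) := by
  obtain rfl | hn := Nat.eq_zero_or_pos n
  · simp
  have hL : 0 < ∑ j, w j :=
    Finset.sum_pos (fun i _ => hw i) (by simpa [Finset.univ_nonempty_iff] using Fin.pos_iff_nonempty.mp hn)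
  have he : Real.exp r - 1 ≤ r + r ^ 2 := by
    have := exp_quad_bound_aux r hr0.le hr1.le; linarith
  have he0 : 0 ≤ Real.exp r - 1 := by
    have := Real.add_one_le_exp r; linarith
  have key : ∀ i, Real.exp (w i * (Real.exp r - 1)) ≤
      1 + (r + r ^ 2) * w i + 4 * r ^ 2 * (w i) ^ 2 := by
    intro i
    have hwi := hw i
    have hx0 : 0 ≤ w i * (Real.exp r - 1) := mul_nonneg hwi.le he0
    have hx1 : w i * (Real.exp r - 1) ≤ 1 :=
      le_trans (by nlinarith) (hwr i)
    have h := exp_quad_bound_aux _ hx0 hx1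
    have hrr : r + r ^ 2 ≤ 2 * r := by nlinarith
    have h2 : w i * (Real.exp r - 1) ≤ 2 * r * w i := by nlinarith
    have h3 : (w i * (Real.exp r - 1)) ^ 2 ≤ (2 * r * w i) ^ 2 :=
      pow_le_pow_left₀ hx0 h2 2
    nlinarith
  have sum_le : (∑ i, w i * Real.exp (w i * (Real.exp r - 1))) ≤
      (∑ j, w j) + (r + r ^ 2) * (∑ i, (w i) ^ 2) + 4 * r ^ 2 * (∑ i, (w i) ^ 3) := by
    calc (∑ i, w i * Real.exp (w i * (Real.exp r - 1)))
        ≤ ∑ i, w i * (1 + (r + r ^ 2) * w i + 4 * r ^ 2 * (w i) ^ 2) :=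
          Finset.sum_le_sum fun i _ => mul_le_mul_of_nonneg_left (key i) (hw i).le
      _ = (∑ j, w j) + (r + r ^ 2) * (∑ i, (w i) ^ 2) + 4 * r ^ 2 * (∑ i, (w i) ^ 3) := by
          rw [Finset.mul_sum, Finset.mul_sum, ← Finset.sum_add_distrib, ← Finset.sum_add_distrib]
          exact Finset.sum_congr rfl fun i _ => by ring
  have hrw : (∑ i, (w i / (∑ j, w j)) * Real.exp (w i * (Real.exp r - 1)))
      = (∑ i, w i * Real.exp (w i * (Real.exp r - 1))) / (∑ j, w j) := by
    rw [Finset.sum_div]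
    exact Finset.sum_congr rfl fun i _ => by ring
  rw [hrw, div_le_iff₀ hL]
  have heq : (1 + (r + r ^ 2) * (∑ i, (w i) ^ 2) / (∑ j, w j) +
      4 * r ^ 2 * (∑ i, (w i) ^ 3) / (∑ j, w j)) * (∑ j, w j) =
      (∑ j, w j) + (r + r ^ 2) * (∑ i, (w i) ^ 2) + 4 * r ^ 2 * (∑ i, (w i) ^ 3) := by
    field_simp
  rw [heq]
  exact sum_le
end
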